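/- arXiv:0812.2300 — 3 statements merged into one kernel-verified Lean document; each statement's English description precedes it below -/
import Mathlib

section
/- If a join-semilattice P has no infinite antichain, then P embeds into I_{<ω}(J(P)) as a join-subsemilattice, where J(P) is ordered by inclusion. -/
open Set

/-- The poset `Ω(ω*)`: pairs `(i,j)` of naturals with `i < j`,
ordered by `(i,j) ≤ (i',j')` iff `i' ≤ i ∧ j ≤ j'`. We only need the carrier and the join. -/
abbrev OmegaStar : Type := {p : ℕ × ℕ // p.1 < p.2}

/-- The join in `Ω(ω*)`: `(i,j) ⊔ (i',j') = (min i i', max j j')`. -/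
def omegaJoin (a b : OmegaStar) : OmegaStar :=
  ⟨(min a.1.1 b.1.1, max a.1.2 b.1.2),
    lt_of_le_of_lt (min_le_left _ _) (lt_of_lt_of_le a.2 (le_max_left _ _))⟩

/-- `Ω̲(ω*)`: `Ω(ω*)` with a new least element (`none`) adjoined. -/
abbrev OmegaStarBot : Type := Option OmegaStar

/-- The join in `Ω̲(ω*)`. -/
def omegaBotJoin : OmegaStarBot → OmegaStarBot → OmegaStarBot
  | none, b => b
  | a, none => a
  | some a, some b => some (omegaJoin a b)

/-- `I_{<ω}(Q)`: the finitely generated initial segments of `Q`,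
i.e. downward closures of finite subsets of `Q` (including `∅`). -/
def FinGenInit (Q : Type*) [Preorder Q] : Set (Set Q) :=
  {S | ∃ F : Finset Q, S = {x | ∃ y ∈ F, x ≤ y}}

/-- An ideal of a poset: a nonempty, up-directed, downward closed subset. -/
def IsIdeal {P : Type*} [Preorder P] (I : Set P) : Prop :=
  I.Nonempty ∧ (∀ x ∈ I, ∀ y ∈ I, ∃ z ∈ I, x ≤ z ∧ y ≤ z) ∧
    ∀ x y : P, x ≤ y → y ∈ I → x ∈ I

/-- A completely meet-irreducible ideal: an ideal `I` for which there is an ideal `J ⊋ I`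
contained in every ideal strictly containing `I`. -/
def CMIdeal {P : Type*} [Preorder P] (I : Set P) : Prop :=
  IsIdeal I ∧ ∃ J : Set P, IsIdeal J ∧ I ⊂ J ∧ ∀ K : Set P, IsIdeal K → I ⊂ K → J ⊆ K

/-- An ideal of a sub-poset `P` of `α`: a subset of `P`, nonempty, up-directed,
downward closed within `P`. -/
def IsIdealIn {α : Type*} [Preorder α] (P I : Set α) : Prop :=
  I ⊆ P ∧ I.Nonempty ∧ (∀ x ∈ I, ∀ y ∈ I, ∃ z ∈ I, x ≤ z ∧ y ≤ z) ∧
    ∀ x ∈ P, ∀ y ∈ I, x ≤ y → x ∈ I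

/-- A completely meet-irreducible ideal of the sub-poset `P`. -/
def CMIdealIn {α : Type*} [Preorder α] (P I : Set α) : Prop :=
  IsIdealIn P I ∧ ∃ J : Set α, IsIdealIn P J ∧ I ⊂ J ∧
    ∀ K : Set α, IsIdealIn P K → I ⊂ K → J ⊆ K

/-- `{x} ∨ J`, the ideal `{z : z ≤ x ⊔ y for some y ∈ J}`. -/
def JoinUp {P : Type*} [SemilatticeSup P] (x : P) (J : Set P) : Set P :=
  {z | ∃ y ∈ J, z ≤ x ⊔ y}

/-- A nonempty chain `𝓘` of ideals is separating if for every `I ∈ 𝓘` with `I ≠ ⋃𝓘` and every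
`x ∈ ⋃𝓘 \ I` there is `J ∈ 𝓘` with `I ⊄ {x} ∨ J`. -/
def Separating {P : Type*} [SemilatticeSup P] (𝓘 : Set (Set P)) : Prop :=
  ∀ I ∈ 𝓘, I ≠ ⋃₀ 𝓘 → ∀ x ∈ (⋃₀ 𝓘) \ I, ∃ J ∈ 𝓘, ¬ I ⊆ JoinUp x J

/-- An independent subset of a join-semilattice: no member is below the join of finitely many
of the others. -/
def IndepSet {P : Type*} [SemilatticeSup P] (X : Set P) : Prop :=
  ∀ x ∈ X, ∀ F : Finset P, ∀ hF : F.Nonempty, ↑F ⊆ X \ {x} → ¬ x ≤ F.sup' hF id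

/-- `ℱ^{<ω}`: unions of finite subfamilies of `ℱ` (including `∅`). -/
def finUnions {α : Type*} (ℱ : Set (Set α)) : Set (Set α) :=
  {S | ∃ G : Finset (Set α), ↑G ⊆ ℱ ∧ S = ⋃₀ ↑G}

/-- `ℱ^∪`: unions of arbitrary subfamilies of `ℱ`. -/
def arbUnions {α : Type*} (ℱ : Set (Set α)) : Set (Set α) :=
  {S | ∃ G ⊆ ℱ, S = ⋃₀ G}

/-!
Send `p` to the set of ideals not containing `p`. This set is a lower set, it turns joins into
unions because ideals are closed under `⊔`, and principal ideals make it injective. It is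
generated by the ideals maximal among those avoiding `p` (Zorn), so everything rests on there
being only finitely many of these. Otherwise one builds `x₀, x₁, …`, none above `p`, with
`p ≤ xᵢ ⊔ xⱼ` for `i ≠ j`: an infinite antichain.
-/

theorem exists_seq_of_forall_finite_exists_insert {α : Type*} {Q : Set α → Prop} (h₀ : Q ∅)
    (hstep : ∀ t, t.Finite → Q t → ∃ a ∉ t, Q (insert a t)) :
    ∃ u : ℕ → α, Function.Injective u ∧ ∀ n, Q (u '' Iio n) := by
  obtain ⟨a₀, -⟩ := hstep ∅ finite_empty h₀
  have hext : ∀ t : Set α, t.Finite → ∃ a, Q t → a ∉ t ∧ Q (insert a t) := fun t ht =>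
    (em (Q t)).elim (fun hQ => (hstep t ht hQ).imp fun _ h _ => h)
      (fun hQ => ⟨a₀, fun h => absurd h hQ⟩)
  obtain ⟨u, hu⟩ := seq_of_forall_finite_exists hext
  have hQ : ∀ n, Q (u '' Iio n) := by
    intro n
    induction n with
    | zero => simpa using h₀
    | succ n ih =>
      rw [show Iio (n + 1) = insert n (Iio n) from Order.Iio_succ_eq_insert n, image_insert_eq]
      exact (hu n ih).2
  exact ⟨u, .of_lt_imp_ne fun m n hmn h => (hu n (hQ n)).1 ⟨m, hmn, h⟩, hQ⟩

section Ideals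

variable {P : Type*}

theorem isIdeal_iff_order_isIdeal [Preorder P] {I : Set P} : IsIdeal I ↔ Order.IsIdeal I :=
  ⟨fun ⟨hne, hdir, hlow⟩ => ⟨fun _ _ hba ha => hlow _ _ hba ha, hne, hdir⟩,
    fun ⟨hlow, hne, hdir⟩ => ⟨hne, hdir, fun _ _ hxy hy => hlow hxy hy⟩⟩

theorem IsIdeal.isLowerSet [Preorder P] {I : Set P} (hI : IsIdeal I) : IsLowerSet I :=
  fun _ _ hba ha => hI.2.2 _ _ hba ha

theorem isIdeal_Iic [Preorder P] (a : P) : IsIdeal (Iic a) :=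
  ⟨⟨a, le_rfl⟩, fun _ hx _ hy => ⟨a, le_rfl, hx, hy⟩, fun _ _ hxy hy => hxy.trans hy⟩

theorem isIdeal_sUnion_of_isChain [Preorder P] {C : Set (Set P)} (hC : ∀ I ∈ C, IsIdeal I)
    (hchain : IsChain (· ⊆ ·) C) (hne : C.Nonempty) : IsIdeal (⋃₀ C) :=
  isIdeal_iff_order_isIdeal.2 <|
    Order.isIdeal_sUnion_of_isChain (fun I hI => isIdeal_iff_order_isIdeal.1 (hC I hI)) hchain hne

theorem IsIdeal.of_supClosed [SemilatticeSup P] {I : Set P} (hne : I.Nonempty)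
    (hsup : SupClosed I) (hlow : IsLowerSet I) : IsIdeal I :=
  ⟨hne, hsup.directedOn, fun _ _ hxy hy => hlow hxy hy⟩

theorem IsIdeal.sup_mem_iff [SemilatticeSup P] {I : Set P} (hI : IsIdeal I) {a b : P} :
    a ⊔ b ∈ I ↔ a ∈ I ∧ b ∈ I :=
  (isIdeal_iff_order_isIdeal.1 hI).toIdeal.sup_mem_iff

theorem isIdeal_joinUp [SemilatticeSup P] (x : P) {J : Set P} (hJ : IsIdeal J) :
    IsIdeal (JoinUp x J) := by
  obtain ⟨b, hb⟩ := hJ.1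
  refine .of_supClosed ⟨x, b, hb, le_sup_left⟩ ?_ fun _ _ hzw ⟨c, hc, hwc⟩ => ⟨c, hc, hzw.trans hwc⟩
  rintro z₁ ⟨c₁, hc₁, h₁⟩ z₂ ⟨c₂, hc₂, h₂⟩
  refine ⟨c₁ ⊔ c₂, hJ.sup_mem_iff.2 ⟨hc₁, hc₂⟩, sup_le ?_ ?_⟩
  · exact h₁.trans (sup_le_sup_left le_sup_left x)
  · exact h₂.trans (sup_le_sup_left le_sup_right x)

theorem subset_joinUp [SemilatticeSup P] (x : P) (J : Set P) : J ⊆ JoinUp x J :=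
  fun z hz => ⟨z, hz, le_sup_right⟩

end Ideals

section Avoiding

variable {P : Type*}

def idealsAvoiding [Preorder P] (p : P) : Set (Set P) :=
  {I | IsIdeal I ∧ p ∉ I}

theorem exists_maximal_idealsAvoiding [Preorder P] {p : P} {I : Set P}
    (hI : I ∈ idealsAvoiding p) : ∃ M, I ⊆ M ∧ Maximal (· ∈ idealsAvoiding p) M := by
  refine zorn_subset_nonempty _ (fun C hCp hchain hne => ?_) I hI
  refine ⟨⋃₀ C, ⟨isIdeal_sUnion_of_isChain (fun J hJ => (hCp hJ).1) hchain hne, ?_⟩,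
    fun _ => subset_sUnion_of_mem⟩
  rintro ⟨J, hJ, hpJ⟩
  exact (hCp hJ).2 hpJ

variable [SemilatticeSup P] {p : P} {M : Set P}

theorem exists_le_sup_of_notMem_of_maximal (hM : Maximal (· ∈ idealsAvoiding p) M) {x : P}
    (hx : x ∉ M) : ∃ b ∈ M, p ≤ x ⊔ b := by
  by_contra hp
  have hM_eq := hM.eq_of_subset ⟨isIdeal_joinUp x hM.1.1, hp⟩ (subset_joinUp x M)
  obtain ⟨b, hb⟩ := hM.1.1.1
  exact hx (hM_eq ▸ ⟨b, hb, le_sup_left⟩)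

theorem exists_forall_le_sup_of_maximal (hM : Maximal (· ∈ idealsAvoiding p) M) {t : Set P}
    (ht : t.Finite) (htM : Disjoint t M) : ∃ b ∈ M, ∀ x ∈ t, p ≤ x ⊔ b := by
  induction t, ht using Set.Finite.induction_on with
  | empty =>
    obtain ⟨b, hb⟩ := hM.1.1.1
    exact ⟨b, hb, by simp⟩
  | @insert a t _ _ ih =>
    rw [disjoint_insert_left] at htM
    obtain ⟨b, hbM, hb⟩ := ih htM.2
    obtain ⟨c, hcM, hc⟩ := exists_le_sup_of_notMem_of_maximal hM htM.1
    refine ⟨b ⊔ c, hM.1.1.sup_mem_iff.2 ⟨hbM, hcM⟩, forall_mem_insert.2 ⟨?_, fun x hx => ?_⟩⟩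
    · exact hc.trans (sup_le_sup_left le_sup_right a)
    · exact (hb x hx).trans (sup_le_sup_left le_sup_left x)

theorem isLowerSet_setOf_finite_notMem {𝓝 : Set (Set P)} (h𝓝 : ∀ J ∈ 𝓝, IsIdeal J) :
    IsLowerSet {z | {J ∈ 𝓝 | z ∉ J}.Finite} :=
  fun _ _ hba ha => ha.subset fun J ⟨hJ, hb⟩ =>
    ⟨hJ, fun haJ => hb ((h𝓝 J hJ).isLowerSet hba haJ)⟩

theorem supClosed_setOf_finite_notMem {𝓝 : Set (Set P)} (h𝓝 : ∀ J ∈ 𝓝, IsIdeal J) :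
    SupClosed {z | {J ∈ 𝓝 | z ∉ J}.Finite} :=
  fun _ ha _ hb => (ha.union hb).subset fun J ⟨hJ, hab⟩ =>
    (not_and_or.1 (mt (h𝓝 J hJ).sup_mem_iff.2 hab)).imp (⟨hJ, ·⟩) (⟨hJ, ·⟩)

/-- The extension step of the antichain construction. -/
theorem exists_le_sup_and_infinite_notMem {𝓝 : Set (Set P)}
    (h𝓝 : ∀ J ∈ 𝓝, Maximal (· ∈ idealsAvoiding p) J) (hinf : 𝓝.Infinite) {t : Set P}
    (ht : t.Finite) (htN : ∀ J ∈ 𝓝, Disjoint t J) :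
    ∃ y ∈ ⋃₀ 𝓝, (∀ x ∈ t, p ≤ x ⊔ y) ∧ {J ∈ 𝓝 | y ∉ J}.Infinite := by
  by_contra! hfin
  have hideal : ∀ J ∈ 𝓝, IsIdeal J := fun J hJ => (h𝓝 J hJ).1.1
  set I := {z | {J ∈ 𝓝 | z ∉ J}.Finite}
  have hsub : ∀ J ∈ 𝓝, J ⊆ I := by
    intro J hJ b hb
    obtain ⟨w, hwJ, hw⟩ := exists_forall_le_sup_of_maximal (h𝓝 J hJ) ht (htN J hJ)
    refine isLowerSet_setOf_finite_notMem hideal le_sup_left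
      (hfin (b ⊔ w) ⟨J, hJ, (hideal J hJ).sup_mem_iff.2 ⟨hb, hwJ⟩⟩ fun x hx => ?_)
    exact (hw x hx).trans (sup_le_sup_left le_sup_right x)
  obtain ⟨J₀, hJ₀⟩ := hinf.nonempty
  have hI : I ∈ idealsAvoiding p :=
    ⟨.of_supClosed ((hideal J₀ hJ₀).1.mono (hsub J₀ hJ₀)) (supClosed_setOf_finite_notMem hideal)
      (isLowerSet_setOf_finite_notMem hideal),
      fun hp => hinf (hp.subset fun J hJ => ⟨hJ, (h𝓝 J hJ).1.2⟩)⟩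
  exact hinf ((finite_singleton I).subset fun J hJ => (h𝓝 J hJ).eq_of_subset hI (hsub J hJ))

theorem isAntichain_of_pairwise_le_sup {t : Set P} (hp : ∀ x ∈ t, ¬ p ≤ x)
    (hpair : t.Pairwise fun x y => p ≤ x ⊔ y) : IsAntichain (· ≤ ·) t :=
  fun _ hx y hy hne hle => hp y hy (sup_eq_right.2 hle ▸ hpair hx hy hne)

theorem finite_setOf_maximal_idealsAvoiding
    (hac : ∀ A : Set P, IsAntichain (· ≤ ·) A → A.Finite) (p : P) :
    {M | Maximal (· ∈ idealsAvoiding p) M}.Finite := by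
  by_contra hinf
  let Q : Set P → Prop := fun t => (∀ x ∈ t, ¬ p ≤ x) ∧ t.Pairwise (fun x y => p ≤ x ⊔ y) ∧
    {M | Maximal (· ∈ idealsAvoiding p) M ∧ Disjoint t M}.Infinite
  have hstep : ∀ t, t.Finite → Q t → ∃ y ∉ t, Q (insert y t) := by
    rintro t ht ⟨hp, hpair, hinf⟩
    obtain ⟨y, ⟨J, ⟨hJ, htJ⟩, hyJ⟩, hdom, hinf'⟩ :=
      exists_le_sup_and_infinite_notMem (fun J hJ => hJ.1) hinf ht fun J hJ => hJ.2
    refine ⟨y, fun hyt => htJ.ne_of_mem hyt hyJ rfl,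
      forall_mem_insert.2 ⟨fun hpy => hJ.1.2 (hJ.1.1.isLowerSet hpy hyJ), hp⟩,
      hpair.insert fun x hx _ => ⟨sup_comm x y ▸ hdom x hx, hdom x hx⟩, ?_⟩
    convert hinf' using 1
    ext M
    simp only [disjoint_insert_left, mem_ofPred_eq]
    tauto
  obtain ⟨u, hu, hQ⟩ := exists_seq_of_forall_finite_exists_insert (Q := Q)
    ⟨by simp, by simp, by simpa using hinf⟩ hstep
  refine infinite_range_of_injective hu (hac _ ?_)
  rintro _ ⟨m, rfl⟩ _ ⟨n, rfl⟩
  obtain ⟨hp, hpair, -⟩ := hQ (max m n + 1)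
  exact isAntichain_of_pairwise_le_sup hp hpair ⟨m, Nat.lt_succ_of_le (le_max_left m n), rfl⟩
    ⟨n, Nat.lt_succ_of_le (le_max_right m n), rfl⟩

theorem setOf_notMem_mem_finGenInit (hac : ∀ A : Set P, IsAntichain (· ≤ ·) A → A.Finite)
    (p : P) : {I : {I : Set P // IsIdeal I} | p ∉ I.1} ∈ FinGenInit {I : Set P // IsIdeal I} := by
  have hfin : {I : {I : Set P // IsIdeal I} | Maximal (· ∈ idealsAvoiding p) I.1}.Finite :=
    (finite_setOf_maximal_idealsAvoiding hac p).preimage Subtype.val_injective.injOn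
  refine ⟨hfin.toFinset, ?_⟩
  ext I
  simp only [Finite.mem_toFinset, mem_ofPred_eq]
  refine ⟨fun hpI => ?_, fun ⟨M, hM, hIM⟩ hpI => hM.1.2 (hIM hpI)⟩
  obtain ⟨M, hIM, hM⟩ := exists_maximal_idealsAvoiding ⟨I.2, hpI⟩
  exact ⟨⟨M, hM.1.1⟩, hM, hIM⟩

end Avoiding

/-- If a join-semilattice `P` has no infinite antichain, then it embeds into
`I_{<ω}(J(P))` as a join-subsemilattice. -/
theorem no_infinite_antichain_embeds {P : Type*} [SemilatticeSup P]
    (hac : ∀ A : Set P, IsAntichain (· ≤ ·) A → A.Finite) :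
    ∃ f : P → Set {I : Set P // IsIdeal I},
      (∀ p, f p ∈ FinGenInit {I : Set P // IsIdeal I}) ∧ Function.Injective f ∧
        ∀ a b, f (a ⊔ b) = f a ∪ f b := by
  refine ⟨fun p => {I | p ∉ I.1}, setOf_notMem_mem_finGenInit hac, fun a b hab => ?_,
    fun a b => ?_⟩
  · have hmem (I : {I : Set P // IsIdeal I}) : a ∈ I.1 ↔ b ∈ I.1 :=
      not_iff_not.1 (Set.ext_iff.1 hab I)
    exact le_antisymm ((hmem ⟨Iic b, isIdeal_Iic b⟩).2 le_rfl)
      ((hmem ⟨Iic a, isIdeal_Iic a⟩).1 le_rfl)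
  · ext I
    simp only [mem_ofPred_eq, mem_union, I.2.sup_mem_iff, not_and_or]
end

section
/- Let Q be a poset in which the set {y ∈ Q : y ≤ q} is finite for every q ∈ Q, let ℱ be a subset of I_{<ω}(Q), and let P := ℱ^{<ω} be ordered by inclusion. Then: (a) for every ideal I of P with I ≠ P, letting I⁺ denote the intersection of all ideals of P strictly containing I (which is an ideal of P), the set (⋃I⁺) \ (⋃I) is finite; and (b) for every X ∈ P, the set φ_Δ(X) = {I ∈ Δ(J(P)) : X ∉ I} is finite. -/
open Set

/-!
Members of `P = ℱ^{<ω}` are finite, so an ideal `I` of `P` contains every `Z ∈ P` with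
`Z ⊆ ⋃I`. For `X ∈ P \ I` the ideal generated by `I` and `X` strictly contains `I` and has union
inside `⋃I ∪ X`, which bounds `⋃I⁺ \ ⋃I` by `X`. If `I` is completely meet-irreducible with
cover `J`, pick `Z ∈ J \ I` and `q ∈ Z \ ⋃I`; as `J` lies in the ideal generated by `I` and any
`Y ∉ I`, the point `q` lies in every such `Y`, so `I = {Y ∈ P | q ∉ Y}`. If moreover `X ∉ I`, then
`q ∈ X`, so there are at most `|X|` such ideals.
-/

section IdealIn

variable {α : Type*} [SemilatticeSup α] {P I : Set α} {x : α}

lemma IsIdealIn.inter_joinUp (hP : ∀ a ∈ P, ∀ b ∈ P, a ⊔ b ∈ P) (hI : IsIdealIn P I)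
    (hx : x ∈ P) : IsIdealIn P (P ∩ JoinUp x I) := by
  obtain ⟨-, ⟨y₀, hy₀⟩, hdir, -⟩ := hI
  refine ⟨inter_subset_left, ⟨x, hx, y₀, hy₀, le_sup_left⟩, ?_, ?_⟩
  · rintro z₁ ⟨hz₁, y₁, hy₁, hzy₁⟩ z₂ ⟨hz₂, y₂, hy₂, hzy₂⟩
    obtain ⟨y, hy, hy₁y, hy₂y⟩ := hdir y₁ hy₁ y₂ hy₂
    refine ⟨z₁ ⊔ z₂, ⟨hP _ hz₁ _ hz₂, y, hy, sup_le ?_ ?_⟩, le_sup_left, le_sup_right⟩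
    · exact hzy₁.trans (sup_le_sup_left hy₁y x)
    · exact hzy₂.trans (sup_le_sup_left hy₂y x)
  · rintro z hz w ⟨-, y, hy, hwy⟩ hzw
    exact ⟨hz, y, hy, hzw.trans hwy⟩

lemma IsIdealIn.ssubset_inter_joinUp (hI : IsIdealIn P I) (hx : x ∈ P) (hxI : x ∉ I) :
    I ⊂ P ∩ JoinUp x I := by
  obtain ⟨y₀, hy₀⟩ := hI.2.1
  refine ssubset_of_subset_not_subset (fun y hy => ⟨hI.1 hy, y, hy, le_sup_right⟩) ?_
  exact fun h => hxI (h ⟨hx, y₀, hy₀, le_sup_left⟩)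

lemma IsIdealIn.sInter (hP : ∀ a ∈ P, ∀ b ∈ P, a ⊔ b ∈ P) {𝒥 : Set (Set α)}
    (h𝒥 : ∀ J ∈ 𝒥, IsIdealIn P J) (hJ : 𝒥.Nonempty) (hne : (⋂₀ 𝒥).Nonempty) :
    IsIdealIn P (⋂₀ 𝒥) := by
  obtain ⟨J₀, hJ₀⟩ := hJ
  have hsub : ⋂₀ 𝒥 ⊆ P := (sInter_subset_of_mem hJ₀).trans (h𝒥 J₀ hJ₀).1
  refine ⟨hsub, hne, fun z₁ hz₁ z₂ hz₂ => ?_, ?_⟩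
  · refine ⟨z₁ ⊔ z₂, fun J hJ => ?_, le_sup_left, le_sup_right⟩
    obtain ⟨w, hw, hz₁w, hz₂w⟩ := (h𝒥 J hJ).2.2.1 z₁ (hz₁ J hJ) z₂ (hz₂ J hJ)
    exact (h𝒥 J hJ).2.2.2 _ (hP _ (hsub hz₁) _ (hsub hz₂)) w hw (sup_le hz₁w hz₂w)
  · exact fun z hz w hw hzw J hJ => (h𝒥 J hJ).2.2.2 z hz w (hw J hJ) hzw

/-- The ideal `I⁺` of the paper. -/
def idealSucc (P I : Set α) : Set α :=
  ⋂₀ {J | IsIdealIn P J ∧ I ⊂ J}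

lemma IsIdealIn.idealSucc_subset_inter_joinUp (hP : ∀ a ∈ P, ∀ b ∈ P, a ⊔ b ∈ P)
    (hI : IsIdealIn P I) (hx : x ∈ P) (hxI : x ∉ I) : idealSucc P I ⊆ P ∩ JoinUp x I :=
  sInter_subset_of_mem ⟨hI.inter_joinUp hP hx, hI.ssubset_inter_joinUp hx hxI⟩

lemma IsIdealIn.idealSucc (hP : ∀ a ∈ P, ∀ b ∈ P, a ⊔ b ∈ P) (hI : IsIdealIn P I)
    (hx : x ∈ P) (hxI : x ∉ I) : IsIdealIn P (idealSucc P I) :=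
  IsIdealIn.sInter hP (fun _ hJ => hJ.1)
    ⟨_, hI.inter_joinUp hP hx, hI.ssubset_inter_joinUp hx hxI⟩
    (hI.2.1.mono fun _ hy _ hJ => hJ.2.1 hy)

end IdealIn

lemma finite_of_mem_finGenInit {Q : Type*} [Preorder Q] (hfin : ∀ q : Q, {y | y ≤ q}.Finite)
    {S : Set Q} (hS : S ∈ FinGenInit Q) : S.Finite := by
  obtain ⟨F, rfl⟩ := hS
  convert F.finite_toSet.biUnion fun y _ => hfin y using 1
  ext
  simp

section FinUnions

variable {α : Type*} {ℱ : Set (Set α)} {A B : Set α}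

lemma union_mem_finUnions (hA : A ∈ finUnions ℱ) (hB : B ∈ finUnions ℱ) :
    A ∪ B ∈ finUnions ℱ := by
  classical
  obtain ⟨G₁, hG₁, rfl⟩ := hA
  obtain ⟨G₂, hG₂, rfl⟩ := hB
  exact ⟨G₁ ∪ G₂, by simpa using union_subset hG₁ hG₂, by rw [Finset.coe_union, sUnion_union]⟩

lemma Set.Finite.of_mem_finUnions (hℱ : ∀ F ∈ ℱ, F.Finite) (hA : A ∈ finUnions ℱ) : A.Finite := by
  obtain ⟨G, hG, rfl⟩ := hA
  exact G.finite_toSet.sUnion fun F hF => hℱ F (hG hF)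

lemma sUnion_inter_joinUp_subset (P I : Set (Set α)) (X : Set α) :
    ⋃₀ (P ∩ JoinUp X I) ⊆ X ∪ ⋃₀ I := by
  rintro q ⟨Z, ⟨-, Y, hY, hZ⟩, hqZ⟩
  exact (hZ hqZ).imp_right fun hqY => ⟨Y, hY, hqY⟩

variable {I : Set (Set α)}

lemma IsIdealIn.mem_of_subset_sUnion (hℱ : ∀ F ∈ ℱ, F.Finite) (hI : IsIdealIn (finUnions ℱ) I)
    (hA : A ∈ finUnions ℱ) (hAI : A ⊆ ⋃₀ I) : A ∈ I := by
  obtain ⟨W, hW, hAW⟩ := DirectedOn.exists_mem_subset_of_finite_of_subset_sUnion hI.2.1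
    (fun Y₁ hY₁ Y₂ hY₂ => hI.2.2.1 Y₁ hY₁ Y₂ hY₂) (.of_mem_finUnions hℱ hA) hAI
  exact hI.2.2.2 A hA W hW hAW

lemma CMIdealIn.exists_eq_setOf_notMem (hℱ : ∀ F ∈ ℱ, F.Finite)
    (hI : CMIdealIn (finUnions ℱ) I) : ∃ q, I = {Y ∈ finUnions ℱ | q ∉ Y} := by
  obtain ⟨hI, J, hJ, hIJ, hJmin⟩ := hI
  obtain ⟨Z, hZJ, hZI⟩ := exists_of_ssubset hIJ
  obtain ⟨q, hqZ, hqI⟩ := not_subset.mp fun h => hZI (hI.mem_of_subset_sUnion hℱ (hJ.1 hZJ) h)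
  refine ⟨q, Subset.antisymm (fun Y hY => ⟨hI.1 hY, fun hqY => hqI ⟨Y, hY, hqY⟩⟩) ?_⟩
  rintro Y ⟨hY, hqY⟩
  by_contra hYI
  have hJY := hJmin _ (hI.inter_joinUp (fun _ hA _ hB => union_mem_finUnions hA hB) hY)
    (hI.ssubset_inter_joinUp hY hYI)
  obtain ⟨-, W, hW, hZW⟩ := hJY hZJ
  exact (hZW hqZ).elim hqY fun hqW => hqI ⟨W, hW, hqW⟩

end FinUnions

/-- Suppose every principal initial segment of `Q` is finite, `ℱ ⊆ I_{<ω}(Q)`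
and `P := ℱ^{<ω}`. Then (a) for every ideal `I ≠ P` of `P`, `I⁺` (the intersection of all
ideals strictly containing `I`) is an ideal of `P` and `(⋃I⁺) \ (⋃I)` is finite; and (b) for
every `X ∈ P`, the set `φ_Δ(X) = {I ∈ Δ(J(P)) : X ∉ I}` is finite. -/
theorem finite_plus_and_phiDelta {Q : Type*} [PartialOrder Q]
    (hfin : ∀ q : Q, {y : Q | y ≤ q}.Finite) (ℱ : Set (Set Q)) (hℱ : ℱ ⊆ FinGenInit Q) :
    (∀ I : Set (Set Q), IsIdealIn (finUnions ℱ) I → I ≠ finUnions ℱ →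
      IsIdealIn (finUnions ℱ) (⋂₀ {J : Set (Set Q) | IsIdealIn (finUnions ℱ) J ∧ I ⊂ J}) ∧
        ((⋃₀ ⋂₀ {J : Set (Set Q) | IsIdealIn (finUnions ℱ) J ∧ I ⊂ J}) \ ⋃₀ I).Finite) ∧
    ∀ X ∈ finUnions ℱ,
      {I : Set (Set Q) | CMIdealIn (finUnions ℱ) I ∧ X ∉ I}.Finite := by
  have hℱfin : ∀ F ∈ ℱ, F.Finite := fun F hF => finite_of_mem_finGenInit hfin (hℱ hF)
  have hP : ∀ A ∈ finUnions ℱ, ∀ B ∈ finUnions ℱ, A ⊔ B ∈ finUnions ℱ :=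
    fun _ hA _ hB => union_mem_finUnions hA hB
  refine ⟨fun I hI hIP => ?_, fun X hX => ?_⟩
  · obtain ⟨X, hX, hXI⟩ := exists_of_ssubset (hI.1.ssubset_of_ne hIP)
    refine ⟨hI.idealSucc hP hX hXI, (Set.Finite.of_mem_finUnions hℱfin hX).subset ?_⟩
    rintro q ⟨hq, hqI⟩
    have hqX := sUnion_inter_joinUp_subset _ I X
      (sUnion_mono (hI.idealSucc_subset_inter_joinUp hP hX hXI) hq)
    exact hqX.resolve_right hqI
  · refine ((Set.Finite.of_mem_finUnions hℱfin hX).image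
      fun q => {Y ∈ finUnions ℱ | q ∉ Y}).subset ?_
    rintro I ⟨hI, hXI⟩
    obtain ⟨q, rfl⟩ := hI.exists_eq_setOf_notMem hℱfin
    exact ⟨q, not_not.mp fun hqX => hXI ⟨hX, hqX⟩, rfl⟩
end

section
/- Let Q be a well-founded poset and let P be a subset of I_{<ω}(Q) closed under binary union (a join-subsemilattice of I_{<ω}(Q)), ordered by inclusion. Then J(P), ordered by inclusion, is well-founded if and only if P has no infinite antichain. -/
/-!
If `J(P)` is well-founded and `A ⊆ P` is an infinite antichain, take an infinite `B ⊆ A` whose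
ideal in `P` is minimal. A member `a ∈ B` is generated by finitely many points and every other
member of `B` misses one of them, so some point `x ∈ a` is missed by infinitely many members
of `B`; these generate a strictly smaller ideal, one that does not contain `a`.

Conversely, choosing `p n ∈ I n \ I (n + 1)` along a strictly decreasing sequence of ideals gives
a sequence in `P` with `p m ⊄ p n` for all `m < n`. Comparing antichain generators as multisets
turns strict inclusion of finitely generated initial segments into a Dershowitz–Manna descent, so
`P` is well-founded; without infinite antichains it is therefore partially well-ordered, and such
a sequence cannot exist.
-/

open Set

section IdealSpan

variable {α : Type*} [SemilatticeSup α] [OrderBot α] {P : Set α}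

def idealSpan (P B : Set α) : Set α :=
  {p ∈ P | ∃ s : Finset α, ↑s ⊆ B ∧ p ≤ s.sup id}

theorem idealSpan_mono {B C : Set α} (h : B ⊆ C) : idealSpan P B ⊆ idealSpan P C :=
  fun _ ⟨hp, s, hs, hps⟩ => ⟨hp, s, hs.trans h, hps⟩

theorem mem_idealSpan {B : Set α} (hBP : B ⊆ P) {b : α} (hb : b ∈ B) : b ∈ idealSpan P B :=
  ⟨hBP hb, {b}, by simpa using hb, by simp⟩

theorem isIdealIn_idealSpan (hcl : ∀ x ∈ P, ∀ y ∈ P, x ⊔ y ∈ P) {B : Set α} (hBP : B ⊆ P)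
    (hB : B.Nonempty) : IsIdealIn P (idealSpan P B) := by
  classical
  refine ⟨fun _ hp => hp.1, hB.imp fun _ => mem_idealSpan hBP, ?_, ?_⟩
  · rintro p ⟨hpP, s, hsB, hps⟩ q ⟨hqP, t, htB, hqt⟩
    refine ⟨p ⊔ q, ⟨hcl p hpP q hqP, s ∪ t, by simpa using ⟨hsB, htB⟩, ?_⟩, le_sup_left,
      le_sup_right⟩
    rw [Finset.sup_union]
    exact sup_le_sup hps hqt
  · rintro p hpP q ⟨-, s, hsB, hqs⟩ hpq
    exact ⟨hpP, s, hsB, hpq.trans hqs⟩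

end IdealSpan

theorem Set.IsWF.isPWO_of_finite_antichains {α : Type*} [Preorder α] {s : Set α} (hwf : s.IsWF)
    (hfin : ∀ t ⊆ s, IsAntichain (· ≤ ·) t → t.Finite) : s.IsPWO := by
  have : WellFoundedLT s := ⟨hwf⟩
  refine (wellQuasiOrderedLE_iff.2 ⟨this, fun t ht => ?_⟩).wqo
  refine Set.Finite.of_finite_image ?_ Subtype.val_injective.injOn
  exact hfin _ (by simp) (ht.image _ fun _ _ h => h)

theorem wellFounded_idealsIn_of_isPWO {α : Type*} [Preorder α] {P : Set α} (hP : P.IsPWO) :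
    WellFounded (fun I J : {I : Set α // IsIdealIn P I} => I < J) := by
  refine wellFounded_iff_isEmpty_descending_chain.2 ⟨fun ⟨I, hI⟩ => ?_⟩
  have hanti : Antitone fun n => (I n).1 := antitone_nat_of_succ_le fun n => (hI n).le
  choose p hpI hpI' using fun n => Set.exists_of_ssubset (hI n)
  obtain ⟨m, n, hmn, hle⟩ := hP.exists_lt fun n => (I n).2.1 (hpI n)
  exact hpI' m ((I (m + 1)).2.2.2.2 (p m) ((I m).2.1 (hpI m)) (p n) (hanti hmn (hpI n)) hle)

section FinGenInit

variable {Q : Type*} [PartialOrder Q]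

theorem isLowerSet_of_mem_finGenInit {S : Set Q} (hS : S ∈ FinGenInit Q) : IsLowerSet S := by
  obtain ⟨F, rfl⟩ := hS
  exact fun x y hyx ⟨z, hz, hxz⟩ => ⟨z, hz, hyx.trans hxz⟩

theorem exists_isAntichain_of_mem_finGenInit {S : Set Q} (hS : S ∈ FinGenInit Q) :
    ∃ F : Finset Q, IsAntichain (· ≤ ·) (F : Set Q) ∧ S = {x | ∃ y ∈ F, x ≤ y} := by
  classical
  obtain ⟨F, rfl⟩ := hS
  refine ⟨F.filter (Maximal (· ∈ F)), ?_, ?_⟩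
  · exact (setOfPred_maximal_antichain _).subset fun x hx => (Finset.mem_filter.1 hx).2
  · ext x
    constructor
    · rintro ⟨y, hy, hxy⟩
      obtain ⟨z, hyz, hz⟩ := F.exists_le_maximal hy
      exact ⟨z, Finset.mem_filter.2 ⟨hz.prop, hz⟩, hxy.trans hyz⟩
    · rintro ⟨y, hy, hxy⟩
      exact ⟨y, (Finset.mem_filter.1 hy).1, hxy⟩

theorem isDershowitzMannaLT_of_ssubset {F G : Finset Q} (hF : IsAntichain (· ≤ ·) (F : Set Q))
    (h : {x | ∃ y ∈ F, x ≤ y} ⊂ {x | ∃ y ∈ G, x ≤ y}) :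
    Multiset.IsDershowitzMannaLT F.val G.val := by
  classical
  refine ⟨(F ∩ G).val, (F \ G).val, (G \ F).val, ?_, ?_, ?_, ?_⟩
  · intro hGF
    have : G ⊆ F := Finset.sdiff_eq_empty_iff_subset.1 (Finset.val_eq_zero.1 hGF)
    exact h.not_subset fun x ⟨y, hy, hxy⟩ => ⟨y, this hy, hxy⟩
  · rw [Finset.inter_val, Finset.sdiff_val, add_comm, Multiset.sub_add_inter]
  · rw [Finset.inter_val, Finset.sdiff_val, Multiset.inter_comm, add_comm, Multiset.sub_add_inter]
  · intro y hy
    obtain ⟨hyF, hyG⟩ := Finset.mem_sdiff.1 hy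
    obtain ⟨z, hzG, hyz⟩ := h.subset ⟨y, hyF, le_rfl⟩
    have hyz : y < z := hyz.lt_of_ne fun hyz => hyG (hyz ▸ hzG)
    exact ⟨z, Finset.mem_sdiff.2 ⟨hzG, fun hzF => hF.not_lt hyF hzF hyz⟩, hyz⟩

theorem isWF_finGenInit [WellFoundedLT Q] : (FinGenInit Q).IsWF := by
  choose F hF hSF using fun S : FinGenInit Q => exists_isAntichain_of_mem_finGenInit S.2
  refine Subrelation.wf (fun {S T} hST => ?_)
    (InvImage.wf (fun S => (F S).val) Multiset.wellFounded_isDershowitzMannaLT)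
  have hST : S.1 ⊂ T.1 := hST
  rw [hSF S, hSF T] at hST
  exact isDershowitzMannaLT_of_ssubset (hF S) hST

theorem exists_mem_infinite_setOf_notMem {a : Set Q} (ha : a ∈ FinGenInit Q)
    {B : Set (Set Q)} (hB : B.Infinite) (hBlow : ∀ b ∈ B, IsLowerSet b)
    (haB : ∀ b ∈ B, a ≠ b → ¬ a ⊆ b) : ∃ x ∈ a, {b ∈ B | x ∉ b}.Infinite := by
  obtain ⟨F, rfl⟩ := ha
  have hcover : B ⊆ insert {x | ∃ y ∈ F, x ≤ y} (⋃ y ∈ F, {b ∈ B | y ∉ b}) := by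
    intro b hb
    by_cases hab : {x | ∃ y ∈ F, x ≤ y} = b
    · exact Or.inl hab.symm
    obtain ⟨x, ⟨y, hy, hxy⟩, hxb⟩ := Set.not_subset.1 (haB b hb hab)
    exact Or.inr (Set.mem_biUnion hy ⟨hb, fun hyb => hxb (hBlow b hb hxy hyb)⟩)
  by_contra! hfin
  exact hB (((F.finite_toSet.biUnion fun y hy => hfin y ⟨y, hy, le_rfl⟩).insert _).subset hcover)

end FinGenInit

theorem IsAntichain.finite_of_wellFounded_idealsIn {Q : Type*} [PartialOrder Q]
    {P : Set (Set Q)} (hP : P ⊆ FinGenInit Q) (hcl : ∀ X ∈ P, ∀ Y ∈ P, X ∪ Y ∈ P)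
    (hwf : WellFounded (fun I J : {I : Set (Set Q) // IsIdealIn P I} => I < J))
    {A : Set (Set Q)} (hA : IsAntichain (· ⊆ ·) A) (hAP : A ⊆ P) : A.Finite := by
  by_contra hAinf
  have hspan : ∀ B ⊆ A, B.Infinite → IsIdealIn P (idealSpan P B) := fun B hBA hB =>
    isIdealIn_idealSpan hcl (hBA.trans hAP) hB.nonempty
  obtain ⟨⟨_, _⟩, ⟨B, hBA, hB, rfl⟩, hmin⟩ :=
    hwf.has_min {K | ∃ B ⊆ A, B.Infinite ∧ K.1 = idealSpan P B}
      ⟨⟨_, hspan A subset_rfl hAinf⟩, A, subset_rfl, hAinf, rfl⟩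
  obtain ⟨a, haB⟩ := hB.nonempty
  obtain ⟨x, hxa, hB'⟩ := exists_mem_infinite_setOf_notMem (hP (hAP (hBA haB))) hB
    (fun b hb => isLowerSet_of_mem_finGenInit (hP (hAP (hBA hb))))
    (fun b hb hab => hA (hBA haB) (hBA hb) hab)
  have hBB' : {b ∈ B | x ∉ b} ⊆ B := Set.sep_subset _ _
  have ha : a ∉ idealSpan P {b ∈ B | x ∉ b} := by
    rintro ⟨-, s, hsB, has⟩
    rw [Finset.sup_id_set_eq_sUnion] at has
    obtain ⟨b, hbs, hxb⟩ := has hxa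
    exact (hsB hbs).2 hxb
  refine hmin ⟨_, hspan _ (hBB'.trans hBA) hB'⟩ ⟨_, hBB'.trans hBA, hB', rfl⟩ ?_
  exact (Set.ssubset_iff_of_subset (idealSpan_mono hBB')).2
    ⟨a, mem_idealSpan (hBA.trans hAP) haB, ha⟩

/-- For a well-founded poset `Q` and a join-subsemilattice `P` of `I_{<ω}(Q)`,
the poset `J(P)` of ideals of `P` is well-founded iff `P` has no infinite antichain. -/
theorem ideals_wellFounded_iff_no_antichain {Q : Type*} [PartialOrder Q]
    (hQ : WellFounded ((· < ·) : Q → Q → Prop)) (P : Set (Set Q))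
    (hP : P ⊆ FinGenInit Q) (hcl : ∀ X ∈ P, ∀ Y ∈ P, X ∪ Y ∈ P) :
    WellFounded (fun I J : {I : Set (Set Q) // IsIdealIn P I} => I < J) ↔
      ∀ A : Set (Set Q), A ⊆ P → IsAntichain (· ⊆ ·) A → A.Finite := by
  refine ⟨fun hwf A hAP hA => hA.finite_of_wellFounded_idealsIn hP hcl hwf hAP, fun hfin => ?_⟩
  have : WellFoundedLT Q := ⟨hQ⟩
  exact wellFounded_idealsIn_of_isPWO
    ((isWF_finGenInit.mono hP).isPWO_of_finite_antichains hfin)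
end
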